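/- Let Σ be a d×d real symmetric positive semidefinite matrix, Σ̃ a d×d real symmetric positive definite matrix, and P = Σ̃^{−1/2}·(Σ̃^{1/2}·Σ·Σ̃^{1/2})^{1/2}·Σ̃^{−1/2} the optimal transport map matrix. Set C* = P·Σ̃. Then the 2d×2d block matrix with blocks [[Σ, C*], [C*ᵀ, Σ̃]] is positive semidefinite, and tr(C*) = tr((Σ̃^{1/2}·Σ·Σ̃^{1/2})^{1/2}); hence C* attains the maximum of tr(C) over all C making [[Σ, C], [Cᵀ, Σ̃]] positive semidefinite. -/

import Mathlib

open Matrix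
open scoped Classical

/-- The unique positive semidefinite square root of a positive semidefinite real matrix
(junk value `0` if the matrix is not positive semidefinite). -/
noncomputable def psdSqrt {d : ℕ} (A : Matrix (Fin d) (Fin d) ℝ) : Matrix (Fin d) (Fin d) ℝ :=
  if h : A.PosSemidef then
    h.1.eigenvectorUnitary.1 * diagonal ((↑) ∘ (√·) ∘ h.1.eigenvalues) *
      (star h.1.eigenvectorUnitary : Matrix (Fin d) (Fin d) ℝ)
  else 0

/-- The optimal transport map matrix `P = Σ̃^{-1/2} (Σ̃^{1/2} Σ Σ̃^{1/2})^{1/2} Σ̃^{-1/2}`. -/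
noncomputable def otMap {d : ℕ} (S St : Matrix (Fin d) (Fin d) ℝ) :
    Matrix (Fin d) (Fin d) ℝ :=
  (psdSqrt St)⁻¹ * psdSqrt (psdSqrt St * S * psdSqrt St) * (psdSqrt St)⁻¹

/-! Put `R = Σ̃^{1/2}` and `Q = (R Σ R)^{1/2}`, so that `C* = R⁻¹ Q R` and `tr C* = tr Q`. The block
matrix of `C*` is the Gram matrix of the columns of `[Q R⁻¹, R]`. For maximality, congruence by
`diag(R, R⁻¹)` turns `[[Σ, C], [Cᵀ, Σ̃]] ⪰ 0` into `[[Q², R C R⁻¹], [(R C R⁻¹)ᵀ, 1]] ⪰ 0`. Testing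
this against `(s u, -u)` for a unit eigenvector `u` of `Q` with eigenvalue `μ` gives
`2 s uᵀ (R C R⁻¹) u ≤ s² μ² + 1` for every `s > 0`, hence `uᵀ (R C R⁻¹) u ≤ μ`; summing over an
orthonormal eigenbasis gives `tr C ≤ tr Q`. -/

theorem Matrix.trace_eq_sum_star_dotProduct_mulVec {𝕜 n : Type*} [RCLike 𝕜] [Fintype n]
    (b : OrthonormalBasis n 𝕜 (EuclideanSpace 𝕜 n)) (X : Matrix n n 𝕜) :
    X.trace = ∑ i, star ⇑(b i) ⬝ᵥ (X *ᵥ ⇑(b i)) := by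
  classical
  have h := LinearMap.trace_eq_sum_inner (Matrix.toEuclideanLin X) b
  rw [Matrix.toEuclideanLin, toLpLin_eq_toLin,
    LinearMap.trace_eq_matrix_trace 𝕜 (PiLp.basisFun 2 𝕜 n), LinearMap.toMatrix_toLin] at h
  rw [h]
  refine Finset.sum_congr rfl fun i _ => ?_
  rw [EuclideanSpace.inner_eq_star_dotProduct, dotProduct_comm]
  rfl

theorem OrthonormalBasis.star_dotProduct_self {𝕜 n : Type*} [RCLike 𝕜] [Fintype n]
    (b : OrthonormalBasis n 𝕜 (EuclideanSpace 𝕜 n)) (i : n) : star ⇑(b i) ⬝ᵥ ⇑(b i) = 1 := by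
  rw [dotProduct_comm, ← EuclideanSpace.inner_eq_star_dotProduct, b.inner_eq_one]

theorem le_of_forall_pos_two_mul_mul_le_sq_add_one {c μ : ℝ} (hμ : 0 ≤ μ)
    (h : ∀ s : ℝ, 0 < s → 2 * s * c ≤ (s * μ) ^ 2 + 1) : c ≤ μ := by
  rcases hμ.eq_or_lt with rfl | hμ
  · by_contra! hc
    have := h c⁻¹ (inv_pos.mpr hc)
    rw [mul_assoc, inv_mul_cancel₀ hc.ne'] at this
    norm_num at this
  · have := h μ⁻¹ (inv_pos.mpr hμ)
    rw [inv_mul_cancel₀ hμ.ne', one_pow] at this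
    have key : μ⁻¹ * c ≤ 1 := by linarith
    rwa [inv_mul_le_iff₀ hμ, mul_one] at key

namespace Matrix

variable {m n k l : Type*} [Fintype m] [Fintype n]

theorem PosSemidef.two_mul_dotProduct_mulVec_le {A : Matrix m m ℝ} {B : Matrix m n ℝ}
    {D : Matrix n n ℝ} (h : (fromBlocks A B Bᵀ D).PosSemidef) (x : m → ℝ) (y : n → ℝ) :
    2 * (x ⬝ᵥ B *ᵥ y) ≤ x ⬝ᵥ A *ᵥ x + y ⬝ᵥ D *ᵥ y := by
  have := h.dotProduct_mulVec_nonneg (Sum.elim x (-y))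
  have hBt : y ⬝ᵥ Bᵀ *ᵥ x = x ⬝ᵥ B *ᵥ y := by
    rw [dotProduct_mulVec, vecMul_transpose, dotProduct_comm]
  simp only [star_trivial, fromBlocks_mulVec, Sum.elim_comp_inl, Sum.elim_comp_inr,
    sumElim_dotProduct_sumElim, mulVec_neg, dotProduct_add, dotProduct_neg, neg_dotProduct,
    hBt] at this
  linarith

theorem PosSemidef.fromBlocks_transpose_mul_mul [Fintype k] [Fintype l] {A : Matrix m m ℝ}
    {B : Matrix m n ℝ} {D : Matrix n n ℝ} (h : (fromBlocks A B Bᵀ D).PosSemidef)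
    (X : Matrix m k ℝ) (Y : Matrix n l ℝ) :
    (fromBlocks (Xᵀ * A * X) (Xᵀ * B * Y) (Xᵀ * B * Y)ᵀ (Yᵀ * D * Y)).PosSemidef := by
  simpa [fromBlocks_transpose, fromBlocks_multiply, Matrix.mul_assoc] using
    h.conjTranspose_mul_mul_same (fromBlocks X 0 0 Y)

theorem PosSemidef.trace_le_of_posSemidef_fromBlocks_mul_self [DecidableEq n]
    {Q C : Matrix n n ℝ} (hQ : Q.PosSemidef) (h : (fromBlocks (Q * Q) C Cᵀ 1).PosSemidef) :
    C.trace ≤ Q.trace := by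
  rw [trace_eq_sum_star_dotProduct_mulVec hQ.1.eigenvectorBasis, hQ.1.trace_eq_sum_eigenvalues]
  refine Finset.sum_le_sum fun i _ => ?_
  set u : n → ℝ := ⇑(hQ.1.eigenvectorBasis i)
  set μ := hQ.1.eigenvalues i
  have hu : u ⬝ᵥ u = 1 := by
    simpa using hQ.1.eigenvectorBasis.star_dotProduct_self i
  have hQu : Q *ᵥ u = μ • u := hQ.1.mulVec_eigenvectorBasis i
  simp only [star_trivial, RCLike.ofReal_real_eq_id, id]
  refine le_of_forall_pos_two_mul_mul_le_sq_add_one (hQ.eigenvalues_nonneg i) fun s hs => ?_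
  have := h.two_mul_dotProduct_mulVec_le (s • u) u
  simp only [← mulVec_mulVec, mulVec_smul, hQu, smul_dotProduct, dotProduct_smul, hu,
    one_mulVec, smul_eq_mul] at this
  linarith

end Matrix

section psdSqrt

variable {d : ℕ} {A : Matrix (Fin d) (Fin d) ℝ}

theorem posSemidef_psdSqrt (hA : A.PosSemidef) : (psdSqrt A).PosSemidef := by
  rw [psdSqrt, dif_pos hA]
  exact (posSemidef_diagonal_iff.mpr fun i => by simp [Real.sqrt_nonneg]).mul_mul_conjTranspose_same
    _

theorem psdSqrt_mul_self (hA : A.PosSemidef) : psdSqrt A * psdSqrt A = A := by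
  rw [psdSqrt, dif_pos hA]
  conv_rhs => rw [hA.1.spectral_theorem, Unitary.conjStarAlgAut_apply]
  simp only [Matrix.mul_assoc]
  rw [← Matrix.mul_assoc _ (hA.1.eigenvectorUnitary : Matrix (Fin d) (Fin d) ℝ),
    Unitary.coe_star_mul_self, Matrix.one_mul, ← Matrix.mul_assoc (diagonal _),
    diagonal_mul_diagonal]
  congr 3
  funext i
  simp [Real.mul_self_sqrt (hA.eigenvalues_nonneg i)]

theorem isUnit_det_psdSqrt (hA : A.PosDef) : IsUnit (psdSqrt A).det := by
  rw [isUnit_iff_ne_zero]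
  intro h0
  have := congrArg det (psdSqrt_mul_self hA.posSemidef)
  rw [det_mul, h0, zero_mul] at this
  exact hA.det_pos.ne this

end psdSqrt

section

variable {n : Type*} [Fintype n] [DecidableEq n] {S T R Q : Matrix n n ℝ}

theorem posSemidef_fromBlocks_inv_mul_mul (hR : R.IsSymm) (hRT : R * R = T) (hRu : IsUnit R.det)
    (hQ : Q.IsSymm) (hQR : Q * Q = R * S * R) :
    (fromBlocks S (R⁻¹ * Q * R) (R⁻¹ * Q * R)ᵀ T).PosSemidef := by
  have hS : R⁻¹ * (Q * Q) * R⁻¹ = S := by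
    rw [hQR, ← Matrix.mul_assoc, mul_nonsing_inv_cancel_right _ _ hRu,
      nonsing_inv_mul_cancel_left _ _ hRu]
  have := posSemidef_conjTranspose_mul_self (fromBlocks (Q * R⁻¹) R (0 : Matrix n n ℝ) 0)
  simpa [fromBlocks_transpose, fromBlocks_multiply, transpose_nonsing_inv, hR.eq, hQ.eq, hRT,
    Matrix.mul_assoc, ← hS] using this

theorem trace_le_of_posSemidef_fromBlocks (hR : R.IsSymm) (hRT : R * R = T) (hRu : IsUnit R.det)
    (hQ : Q.PosSemidef) (hQR : Q * Q = R * S * R) {C : Matrix n n ℝ}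
    (h : (fromBlocks S C Cᵀ T).PosSemidef) : C.trace ≤ Q.trace := by
  have hT : (R⁻¹)ᵀ * T * R⁻¹ = 1 := by
    rw [transpose_nonsing_inv, hR.eq, ← hRT, nonsing_inv_mul_cancel_left _ _ hRu,
      mul_nonsing_inv _ hRu]
  have h' := h.fromBlocks_transpose_mul_mul R R⁻¹
  rw [hR.eq, ← hQR, hT] at h'
  simpa [trace_conj ((isUnit_iff_isUnit_det R).mpr hRu)] using
    hQ.trace_le_of_posSemidef_fromBlocks_mul_self h'

end

/-- **The cross-covariance `C* = P Σ̃` attains the trace maximum.**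
For `Σ` positive semidefinite and `Σ̃` positive definite, the block matrix
`[[Σ, C*], [C*ᵀ, Σ̃]]` with `C* = P Σ̃` is positive semidefinite,
`tr C* = tr ((Σ̃^{1/2} Σ Σ̃^{1/2})^{1/2})`, and `C*` maximizes `tr C` over all `C` making
`[[Σ, C], [Cᵀ, Σ̃]]` positive semidefinite. -/
theorem otMap_mul_attains_trace_max
    {d : ℕ} (S St : Matrix (Fin d) (Fin d) ℝ)
    (hS : S.PosSemidef) (hSt : St.PosDef) :
    (Matrix.fromBlocks S (otMap S St * St) (otMap S St * St)ᵀ St).PosSemidef ∧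
    (otMap S St * St).trace = (psdSqrt (psdSqrt St * S * psdSqrt St)).trace ∧
    (∀ C : Matrix (Fin d) (Fin d) ℝ,
      (Matrix.fromBlocks S C Cᵀ St).PosSemidef → C.trace ≤ (otMap S St * St).trace) := by
  set R := psdSqrt St
  set Q := psdSqrt (R * S * R)
  have hR : R.IsSymm := isHermitian_iff_isSymm.mp (posSemidef_psdSqrt hSt.posSemidef).1
  have hRT : R * R = St := psdSqrt_mul_self hSt.posSemidef
  have hRu : IsUnit R.det := isUnit_det_psdSqrt hSt
  have hRSR : (R * S * R).PosSemidef := by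
    simpa [hR.eq] using hS.conjTranspose_mul_mul_same R
  have hQ : Q.PosSemidef := posSemidef_psdSqrt hRSR
  have hQR : Q * Q = R * S * R := psdSqrt_mul_self hRSR
  have hC : otMap S St * St = R⁻¹ * Q * R := calc
    otMap S St * St = R⁻¹ * Q * R⁻¹ * (R * R) := by rw [hRT]; rfl
    _ = R⁻¹ * Q * R := by rw [← Matrix.mul_assoc, nonsing_inv_mul_cancel_right _ _ hRu]
  rw [hC, trace_conj' ((isUnit_iff_isUnit_det R).mpr hRu)]
  exact ⟨posSemidef_fromBlocks_inv_mul_mul hR hRT hRu (isHermitian_iff_isSymm.mp hQ.1) hQR,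
    rfl, fun C => trace_le_of_posSemidef_fromBlocks hR hRT hRu hQ hQR⟩
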